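/- Let A, X, Y be topological spaces with Y path-connected and A contractible, and let i : A → X be a continuous map which has the homotopy extension property with respect to Y, in the following sense: for every continuous F₀ : X → Y and every homotopy h : [0,1] × A → Y with h(0, a) = F₀(i(a)) for all a ∈ A, there exists a homotopy H : [0,1] × X → Y with H(0, x) = F₀(x) for all x ∈ X and H(t, i(a)) = h(t, a) for all t ∈ [0,1] and a ∈ A. Then for every continuous F : X → Y and every continuous f : A → Y there exists a continuous F' : X → Y such that F' is homotopic to F and F' ∘ i = f. -/
import Mathlib


open unitInterval

theorem const_homotopic_aux {X Y : Type*} [TopologicalSpace X] [TopologicalSpace Y]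
    [PathConnectedSpace Y] (y₁ y₂ : Y) :
    (ContinuousMap.const X y₁).Homotopic (ContinuousMap.const X y₂) := by
  obtain ⟨p⟩ := PathConnectedSpace.joined y₁ y₂
  exact ⟨⟨⟨fun q => p q.1, by continuity⟩, by simp, by simp⟩⟩

/-- Let `A, X, Y` be topological spaces with `Y` path-connected and `A`
contractible, and let `i : A → X` be a continuous map which has the homotopy extension
property with respect to `Y`: for every continuous `F₀ : X → Y` and every homotopy
`h : [0,1] × A → Y` with `h(0, a) = F₀(i a)`, there is a homotopy `H : [0,1] × X → Y` with
`H(0, x) = F₀ x` and `H(t, i a) = h(t, a)`. Then for every continuous `F : X → Y` and every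
continuous `f : A → Y` there exists a continuous `F' : X → Y` homotopic to `F` with
`F' ∘ i = f`. -/
theorem stmt10 {A X Y : Type*} [TopologicalSpace A] [TopologicalSpace X] [TopologicalSpace Y]
    [PathConnectedSpace Y] [ContractibleSpace A] (i : C(A, X))
    (hep : ∀ (F₀ : C(X, Y)) (h : C(I × A, Y)), (∀ a, h (0, a) = F₀ (i a)) →
      ∃ H : C(I × X, Y), (∀ x, H (0, x) = F₀ x) ∧ ∀ (t : I) (a : A), H (t, i a) = h (t, a))
    (F : C(X, Y)) (f : C(A, Y)) :
    ∃ F' : C(X, Y), F'.Homotopic F ∧ ∀ a, F' (i a) = f a := by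
  obtain ⟨y₁, h₁⟩ := ((id_nullhomotopic A).comp_right (F.comp i) :
    ((F.comp i).comp (ContinuousMap.id A)).Nullhomotopic)
  obtain ⟨y₂, h₂⟩ := ((id_nullhomotopic A).comp_right f :
    (f.comp (ContinuousMap.id A)).Nullhomotopic)
  rw [ContinuousMap.comp_id] at h₁ h₂
  have hFif : (F.comp i).Homotopic f :=
    (h₁.trans (const_homotopic_aux y₁ y₂)).trans h₂.symm
  obtain ⟨G⟩ := hFif
  obtain ⟨H, hH0, hHi⟩ := hep F G.toContinuousMap (fun a => by simp)
  refine ⟨⟨fun x => H (1, x), by continuity⟩, ?_, fun a => ?_⟩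
  · exact ⟨(ContinuousMap.Homotopy.mk H (fun x => hH0 x) (fun x => rfl)).symm⟩
  · simpa using hHi 1 a
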